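/- arXiv:1711.00925 — 4 statements merged into one kernel-verified Lean document; each statement's English description precedes it below -/
import Mathlib

section
/- For every natural number n, every real number λ, and every real x, the Legendre polynomial satisfies the scaling expansion P_n(λx) = Σ_{k=0}^{⌊n/2⌋} (λ^{n−2k} (λ²−1)^k / (2^k k!)) · (d^k/dx^k) P_{n−k}(x), where d^k/dx^k denotes the k-th derivative. -/
open Polynomial

noncomputable def legendre (n : ℕ) : ℝ → ℝ :=
  fun x => (1 / (2 ^ n * (n.factorial : ℝ))) * iteratedDeriv n (fun y => (y ^ 2 - 1) ^ n) x

lemma iteratedDeriv_polyeval (k : ℕ) (p : ℝ[X]) :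
    iteratedDeriv k (fun x => p.eval x) = fun x => (derivative^[k] p).eval x := by
  induction k generalizing p with
  | zero => simp
  | succ k ih =>
    rw [iteratedDeriv_succ']
    have h : deriv (fun x => p.eval x) = fun x => (derivative p).eval x := by
      funext y; exact Polynomial.deriv p
    rw [h, ih, Function.iterate_succ_apply]

noncomputable def Lp (n : ℕ) : ℝ[X] :=
  C (1 / (2 ^ n * (n.factorial : ℝ))) * derivative^[n] ((X ^ 2 - 1) ^ n)

lemma legendre_eq (n : ℕ) : legendre n = fun x => (Lp n).eval x := by
  funext x
  have h : (fun y : ℝ => (y ^ 2 - 1) ^ n) = fun y => (((X : ℝ[X]) ^ 2 - 1) ^ n).eval y := by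
    funext y; simp
  simp only [legendre, Lp, h, iteratedDeriv_polyeval, eval_mul, eval_C]

lemma iterate_derivative_comp_C_mul (k : ℕ) (p : ℝ[X]) (l : ℝ) :
    derivative^[k] (p.comp (C l * X)) = C (l ^ k) * (derivative^[k] p).comp (C l * X) := by
  induction k generalizing p with
  | zero => simp
  | succ k ih =>
    rw [Function.iterate_succ_apply, derivative_comp]
    have : derivative (C l * X) = C l := by simp
    rw [this]
    rw [show C l * (derivative p).comp (C l * X) = C l * ((derivative p).comp (C l * X)) from rfl]
    rw [iterate_derivative_C_mul, ih, Function.iterate_succ_apply, ← mul_assoc, ← C_mul, pow_succ,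
      mul_comm (l ^ k) l]

lemma key (n : ℕ) (l : ℝ) (hl : l ≠ 0) :
    (Lp n).comp (C l * X) =
      ∑ k ∈ Finset.range (n / 2 + 1),
        C (l ^ (n - 2 * k) * (l ^ 2 - 1) ^ k / (2 ^ k * (k.factorial : ℝ))) *
          derivative^[k] (Lp (n - k)) := by
  apply mul_left_cancel₀ (a := C (l ^ n)) (C_ne_zero.mpr (pow_ne_zero _ hl))
  -- LHS
  have hLHS : C (l ^ n) * (Lp n).comp (C l * X) =
      C (1 / (2 ^ n * (n.factorial : ℝ))) *
        derivative^[n] (((X ^ 2 - 1 : ℝ[X]) ^ n).comp (C l * X)) := by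
    rw [Lp, mul_comp, C_comp, iterate_derivative_comp_C_mul]
    ring
  rw [hLHS]
  -- binomial expansion of composed polynomial
  have hcomp : ((X ^ 2 - 1 : ℝ[X]) ^ n).comp (C l * X) =
      ∑ j ∈ Finset.range (n + 1),
        C ((l ^ 2) ^ j * (l ^ 2 - 1) ^ (n - j) * (n.choose j : ℝ)) * (X ^ 2 - 1) ^ j := by
    rw [pow_comp, sub_comp, pow_comp, X_comp, one_comp]
    have : (C l * X) ^ 2 - 1 = C (l ^ 2) * (X ^ 2 - 1) + C (l ^ 2 - 1) := by
      rw [map_sub, map_pow, map_one]; ring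
    rw [this, add_pow]
    refine Finset.sum_congr rfl fun j _ => ?_
    rw [mul_pow, ← map_pow, ← map_pow]
    simp only [map_mul, C_eq_natCast]
    ring
  rw [hcomp, iterate_derivative_sum]
  -- kill low-degree terms and reflect
  have hzero : ∀ j, 2 * j < n →
      derivative^[n] (C ((l ^ 2) ^ j * (l ^ 2 - 1) ^ (n - j) * (n.choose j : ℝ)) *
        ((X : ℝ[X]) ^ 2 - 1) ^ j) = 0 := by
    intro j hj
    rw [iterate_derivative_C_mul, iterate_derivative_eq_zero, mul_zero]
    calc (((X : ℝ[X]) ^ 2 - 1) ^ j).natDegree ≤ j * ((X : ℝ[X]) ^ 2 - 1).natDegree :=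
          natDegree_pow_le
      _ ≤ j * 2 := by
          gcongr
          exact (natDegree_sub_le _ _).trans (by simp)
      _ < n := by omega
  rw [← Finset.sum_range_reflect]
  simp only [Nat.add_sub_cancel]
  rw [(Finset.sum_subset (Finset.range_subset_range.mpr (by omega : n / 2 + 1 ≤ n + 1))
    (fun j hj hj' => by
      refine hzero (n - j) (by
        simp only [Finset.mem_range] at hj hj'
        omega))).symm]
  rw [Finset.mul_sum, Finset.mul_sum]
  refine Finset.sum_congr rfl fun k hk => ?_
  simp only [Finset.mem_range] at hk
  have hk2 : 2 * k ≤ n := by omega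
  have hkn : k ≤ n := by omega
  rw [Lp, iterate_derivative_C_mul, iterate_derivative_C_mul,
    ← Function.iterate_add_apply, (by omega : k + (n - k) = n),
    (by omega : n - (n - k) = k)]
  simp only [← mul_assoc, ← C_mul]
  congr 2
  have hc : ((n.choose (n - k) : ℝ)) = (n.factorial : ℝ) / ((n - k).factorial * k.factorial) := by
    rw [Nat.cast_choose ℝ (by omega : n - k ≤ n), (by omega : n - (n - k) = k)]
  have hl2 : ((l ^ 2) ^ (n - k) : ℝ) = l ^ n * l ^ (n - 2 * k) := by
    rw [← pow_mul, ← pow_add]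
    congr 1
    omega
  rw [hc, hl2]
  have h1 : ((n - k).factorial : ℝ) ≠ 0 := Nat.cast_ne_zero.mpr (Nat.factorial_ne_zero _)
  have h2 : (k.factorial : ℝ) ≠ 0 := Nat.cast_ne_zero.mpr (Nat.factorial_ne_zero _)
  have h3 : (n.factorial : ℝ) ≠ 0 := Nat.cast_ne_zero.mpr (Nat.factorial_ne_zero _)
  have h4 : (2 : ℝ) ^ n ≠ 0 := by positivity
  have h5 : (2 : ℝ) ^ k ≠ 0 := by positivity
  have h6 : (2 : ℝ) ^ (n - k) ≠ 0 := by positivity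
  have h7 : (2 : ℝ) ^ n = 2 ^ k * 2 ^ (n - k) := by
    rw [← pow_add]; congr 1; omega
  field_simp
  rw [h7]
  ring

lemma legendre_eq' (n : ℕ) (y : ℝ) : legendre n y = (Lp n).eval y := by rw [legendre_eq]

theorem legendre_scaling_deriv_expansion (n : ℕ) (l : ℝ) (x : ℝ) :
    legendre n (l * x) =
      ∑ k ∈ Finset.range (n / 2 + 1),
        (l ^ (n - 2 * k) * (l ^ 2 - 1) ^ k / (2 ^ k * (k.factorial : ℝ))) *
          iteratedDeriv k (legendre (n - k)) x := by
  have hD : ∀ k m : ℕ, iteratedDeriv k (legendre m) x = (derivative^[k] (Lp m)).eval x := by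
    intro k m
    rw [legendre_eq, iteratedDeriv_polyeval]
  simp only [hD, legendre_eq']
  set A : ℝ[X] := (Lp n).comp (C x * X) with hA
  set B : ℝ[X] := ∑ k ∈ Finset.range (n / 2 + 1),
      C ((derivative^[k] (Lp (n - k))).eval x / (2 ^ k * (k.factorial : ℝ))) *
        (X ^ (n - 2 * k) * (X ^ 2 - 1) ^ k) with hB
  have hAB : A = B := by
    apply eq_of_infinite_eval_eq
    refine Set.Infinite.mono ?_ ((Set.finite_singleton (0 : ℝ)).infinite_compl)
    intro t ht
    have ht0 : t ≠ 0 := ht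
    have hev := congrArg (fun p : ℝ[X] => p.eval x) (key n t ht0)
    simp only [eval_comp, eval_mul, eval_C, eval_X, eval_finset_sum] at hev
    show eval t A = eval t B
    rw [hA, hB, eval_comp]
    simp only [eval_mul, eval_C, eval_X, eval_finset_sum, eval_pow, eval_sub, eval_one]
    rw [show x * t = t * x from mul_comm x t, hev]
    refine Finset.sum_congr rfl fun k _ => ?_
    ring
  have hfin := congrArg (fun p : ℝ[X] => p.eval l) hAB
  simp only [hA, hB, eval_comp, eval_mul, eval_C, eval_X, eval_finset_sum, eval_pow,
    eval_sub, eval_one] at hfin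
  rw [show l * x = x * l from mul_comm l x, hfin]
  refine Finset.sum_congr rfl fun k _ => ?_
  ring
end

section
/- For every natural number n and every nonzero real number λ, the Legendre polynomial satisfies, for all real x, P_n(λx) = Σ_{k=⌈n/2⌉}^{n} (1/(2^n n!)) · C(n,k) · (λ²−1)^{n−k} · λ^{2k−n} · d^n/dx^n[(x²−1)^k], where C(n,k) is the binomial coefficient (the terms with k < ⌈n/2⌉ vanish because the n-th derivative of (x²−1)^k is zero for 2k < n). -/
open Polynomial Finset

theorem sq_sub_one_pow_mul_eq_sum {R : Type*} [CommRing R] (n : ℕ) (l y : R) :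
    ((l * y) ^ 2 - 1) ^ n =
      ∑ k ∈ range (n + 1), n.choose k * (l ^ 2 - 1) ^ (n - k) * l ^ (2 * k) * (y ^ 2 - 1) ^ k := by
  rw [show (l * y) ^ 2 - 1 = l ^ 2 * (y ^ 2 - 1) + (l ^ 2 - 1) by ring, add_pow]
  refine sum_congr rfl fun k _ => ?_
  rw [mul_pow, ← pow_mul]
  ring

section

variable {𝕜 : Type*} [NontriviallyNormedField 𝕜]

theorem Polynomial.iteratedDeriv_eval (n : ℕ) (p : 𝕜[X]) :
    iteratedDeriv n (fun x => p.eval x) = fun x => (derivative^[n] p).eval x := by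
  induction n with
  | zero => rfl
  | succ n ih =>
    funext x
    rw [iteratedDeriv_succ, ih, Function.iterate_succ_apply']
    exact Polynomial.deriv _

theorem Polynomial.iteratedDeriv_eval_eq_zero {n : ℕ} {p : 𝕜[X]} (h : p.natDegree < n) :
    iteratedDeriv n (fun x => p.eval x) = 0 := by
  rw [iteratedDeriv_eval, iterate_derivative_eq_zero h]
  funext x
  exact eval_zero

theorem iteratedDeriv_sq_sub_one_pow_eq_zero {n k : ℕ} (h : 2 * k < n) :
    iteratedDeriv n (fun y : 𝕜 => (y ^ 2 - 1) ^ k) = 0 := by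
  have hdeg : (((X : 𝕜[X]) ^ 2 - 1) ^ k).natDegree < n := by
    calc (((X : 𝕜[X]) ^ 2 - 1) ^ k).natDegree ≤ k * ((X : 𝕜[X]) ^ 2 - 1).natDegree :=
          natDegree_pow_le
      _ ≤ k * 2 := by gcongr; exact (natDegree_sub_le _ _).trans (by simp)
      _ < n := by omega
  simpa using iteratedDeriv_eval_eq_zero hdeg

theorem iteratedDeriv_sq_sub_one_pow_comp_mul (n : ℕ) (l x : 𝕜) :
    l ^ n * iteratedDeriv n (fun y => (y ^ 2 - 1) ^ n) (l * x) =
      ∑ k ∈ Icc ((n + 1) / 2) n, n.choose k * (l ^ 2 - 1) ^ (n - k) * l ^ (2 * k) *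
        iteratedDeriv n (fun y => (y ^ 2 - 1) ^ k) x := by
  have hscale := congrFun (iteratedDeriv_comp_const_mul (n := n)
    (f := fun y : 𝕜 => (y ^ 2 - 1) ^ n) (by fun_prop) l) x
  rw [← hscale]
  simp only [sq_sub_one_pow_mul_eq_sum n l]
  rw [iteratedDeriv_fun_sum (fun k _ => by fun_prop)]
  simp only [iteratedDeriv_const_mul_field]
  refine (sum_subset (fun k hk => ?_) fun k hk hk' => ?_).symm
  · simp only [mem_Icc, mem_range] at hk ⊢; omega
  · rw [iteratedDeriv_sq_sub_one_pow_eq_zero, Pi.zero_apply, mul_zero]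
    simp only [mem_range, mem_Icc, not_and, not_le] at hk hk'
    omega

end

theorem legendre_scaling_binomial_sum (n : ℕ) (l : ℝ) (hl : l ≠ 0) (x : ℝ) :
    legendre n (l * x) =
      ∑ k ∈ Finset.Icc ((n + 1) / 2) n,
        (1 / (2 ^ n * (n.factorial : ℝ))) * (n.choose k : ℝ) * (l ^ 2 - 1) ^ (n - k) *
          l ^ (2 * k - n) * iteratedDeriv n (fun y => (y ^ 2 - 1) ^ k) x := by
  refine mul_left_cancel₀ (pow_ne_zero n hl) ?_
  rw [legendre, mul_left_comm, iteratedDeriv_sq_sub_one_pow_comp_mul, mul_sum, mul_sum]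
  refine sum_congr rfl fun k hk => ?_
  have hpow : l ^ (2 * k) = l ^ n * l ^ (2 * k - n) := by
    rw [← pow_add]; congr 1; simp only [mem_Icc] at hk; omega
  rw [hpow]
  ring
end

section
/- For all natural numbers n and k with k ≤ n, and every real x, the k-th derivative of the Legendre polynomial of degree n satisfies d^k/dx^k P_n(x) = C(n,k) · ((n+1)_k / 2^k) · Σ_{j=0}^{n−k} ((k−n)_j (n+1+k)_j / (1+k)_j) · ((1−x)/2)^j / j!, where (a)_j = a(a+1)⋯(a+j−1) denotes the rising factorial (Pochhammer symbol) with (a)_0 = 1, and C(n,k) is the binomial coefficient. -/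
/-- Rising factorial (Pochhammer symbol) of a real number: `(a)_j = a (a+1) ⋯ (a+j-1)`. -/
noncomputable def risingFactorial (a : ℝ) (j : ℕ) : ℝ := ∏ i ∈ Finset.range j, (a + i)

private lemma contDiff_pow_sub (p : ℕ) : ContDiff ℝ (⊤ : ℕ∞) (fun y : ℝ => (y - 1) ^ p) :=
  (contDiff_id.sub contDiff_const).pow p

private lemma iteratedDeriv_cmul {m : ℕ} (c : ℝ) {f : ℝ → ℝ} (hf : ContDiff ℝ (⊤ : ℕ∞) f) (x : ℝ) :
    iteratedDeriv m (fun y => c * f y) x = c * iteratedDeriv m f x := by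
  simp only [← iteratedDerivWithin_univ]
  exact iteratedDerivWithin_const_mul (Set.mem_univ x) uniqueDiffOn_univ c
    (hf.of_le (mod_cast le_top)).contDiffWithinAt

private lemma iteratedDeriv_sum' {ι : Type*} (s : Finset ι) (f : ι → ℝ → ℝ)
    (h : ∀ i ∈ s, ContDiff ℝ (⊤ : ℕ∞) (f i)) (m : ℕ) (x : ℝ) :
    iteratedDeriv m (fun y => ∑ i ∈ s, f i y) x = ∑ i ∈ s, iteratedDeriv m (f i) x := by
  have h2 := iteratedFDeriv_sum (𝕜 := ℝ) (f := f) (u := s) (i := m)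
    (fun i hi => (h i hi).of_le (mod_cast le_top))
  simp only [iteratedDeriv_eq_iteratedFDeriv]
  rw [show (fun y => ∑ i ∈ s, f i y) = (∑ i ∈ s, f i ·) from rfl, h2]
  simp

private lemma iteratedDeriv_pow_sub_one (m : ℕ) : ∀ (p : ℕ) (x : ℝ),
    iteratedDeriv m (fun y : ℝ => (y - 1) ^ p) x = (p.descFactorial m : ℝ) * (x - 1) ^ (p - m) := by
  induction m with
  | zero => intro p x; simp
  | succ m ih =>
    intro p x
    rw [iteratedDeriv_succ']
    have hd : (deriv fun y : ℝ => (y - 1) ^ p) = fun y => (p : ℝ) * (y - 1) ^ (p - 1) := by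
      funext y
      simpa using (((hasDerivAt_id y).sub_const 1).pow p).deriv
    rw [hd, iteratedDeriv_cmul (p : ℝ) (contDiff_pow_sub (p - 1)) x, ih (p - 1) x]
    rcases p with _ | q
    · simp
    · rw [Nat.succ_sub_one, Nat.succ_sub_succ, Nat.succ_descFactorial_succ]
      push_cast
      ring

private lemma expand_sq (n : ℕ) (y : ℝ) :
    (y ^ 2 - 1) ^ n =
      ∑ m ∈ Finset.range (n + 1), ((n.choose m : ℝ) * 2 ^ (n - m)) * (y - 1) ^ (n + m) := by
  have h1 : y ^ 2 - 1 = (y - 1) * ((y - 1) + 2) := by ring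
  rw [h1, mul_pow, add_pow, Finset.mul_sum]
  refine Finset.sum_congr rfl fun m hm => ?_
  rw [pow_add]
  ring

private lemma rf_nat (a : ℕ) (j : ℕ) :
    risingFactorial ((a : ℝ) + 1) j = ((a + j).factorial : ℝ) / (a.factorial : ℝ) := by
  induction j with
  | zero => simp [risingFactorial, Nat.factorial_ne_zero]
  | succ j ih =>
    rw [risingFactorial, Finset.prod_range_succ, ← risingFactorial, ih,
      show a + (j + 1) = (a + j) + 1 from rfl, Nat.factorial_succ]
    have h0 : (a.factorial : ℝ) ≠ 0 := Nat.cast_ne_zero.2 (Nat.factorial_ne_zero a)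
    push_cast
    field_simp
    ring

private lemma rf_neg (m j : ℕ) (hj : j ≤ m) :
    risingFactorial (-(m : ℝ)) j = (-1) ^ j * (m.descFactorial j : ℝ) := by
  rw [risingFactorial, Nat.descFactorial_eq_prod_range, Nat.cast_prod,
    show ((-1:ℝ)) ^ j = ∏ _i ∈ Finset.range j, (-1 : ℝ) from by simp, ← Finset.prod_mul_distrib]
  refine Finset.prod_congr rfl fun i hi => ?_
  have hi' : i ≤ m := le_of_lt (lt_of_lt_of_le (Finset.mem_range.1 hi) hj)
  rw [Nat.cast_sub hi']
  ring

private lemma dcast (a b : ℕ) (h : b ≤ a) :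
    (a.descFactorial b : ℝ) = (a.factorial : ℝ) / ((a - b).factorial : ℝ) := by
  have h1 := Nat.factorial_mul_descFactorial h
  have h0 : ((a - b).factorial : ℝ) ≠ 0 := Nat.cast_ne_zero.2 (Nat.factorial_ne_zero _)
  field_simp
  exact_mod_cast (mul_comm ((a-b).factorial) (a.descFactorial b) ▸ h1)

private lemma term_eq (n k j : ℕ) (hk : k ≤ n) (hj : j ≤ n - k) (x : ℝ) :
    (1 / (2 ^ n * (n.factorial : ℝ))) *
      ((n.choose (k + j) : ℝ) * 2 ^ (n - (k + j)) * ((n + (k + j)).descFactorial n : ℝ) *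
        ((k + j).descFactorial k : ℝ) * (x - 1) ^ j) =
    (n.choose k : ℝ) * (risingFactorial ((n : ℝ) + 1) k / 2 ^ k) *
      ((risingFactorial ((k : ℝ) - n) j * risingFactorial ((n : ℝ) + 1 + k) j /
          risingFactorial (1 + (k : ℝ)) j) * ((1 - x) / 2) ^ j / (j.factorial : ℝ)) := by
  have hkj : k + j ≤ n := by omega
  have e1 : risingFactorial ((n:ℝ)+1) k = ((n+k).factorial : ℝ)/(n.factorial : ℝ) := rf_nat n k
  have e2 : risingFactorial ((k:ℝ)-(n:ℝ)) j = (-1)^j * ((n-k).descFactorial j : ℝ) := by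
    rw [show (k:ℝ) - (n:ℝ) = -(((n-k : ℕ)) : ℝ) by rw [Nat.cast_sub hk]; ring]
    exact rf_neg _ _ hj
  have e3 : risingFactorial ((n:ℝ)+1+k) j = ((n+k+j).factorial : ℝ)/((n+k).factorial : ℝ) := by
    rw [show (n:ℝ)+1+(k:ℝ) = ((n+k : ℕ) : ℝ) + 1 by push_cast; ring]
    exact rf_nat _ _
  have e4 : risingFactorial (1+(k:ℝ)) j = ((k+j).factorial : ℝ)/(k.factorial : ℝ) := by
    rw [add_comm 1 (k:ℝ)]; exact rf_nat _ _
  have d1 : ((n+(k+j)).descFactorial n : ℝ) = ((n+k+j).factorial : ℝ)/((k+j).factorial : ℝ) := by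
    rw [show n+(k+j) = n+k+j from (add_assoc n k j).symm, dcast _ _ (by omega),
      show n+k+j-n = k+j from by omega]
  have d2 : ((k+j).descFactorial k : ℝ) = ((k+j).factorial : ℝ)/(j.factorial : ℝ) := by
    rw [dcast _ _ (by omega), show k+j-k = j from by omega]
  have d3 : ((n-k).descFactorial j : ℝ) = ((n-k).factorial : ℝ)/((n-(k+j)).factorial : ℝ) := by
    rw [dcast _ _ hj, show n-k-j = n-(k+j) from by omega]
  have c1 : (n.choose (k+j) : ℝ)
      = (n.factorial : ℝ)/(((k+j).factorial : ℝ) * ((n-(k+j)).factorial : ℝ)) := by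
    rw [Nat.cast_choose ℝ hkj]
  have c2 : (n.choose k : ℝ) = (n.factorial : ℝ)/((k.factorial : ℝ) * ((n-k).factorial : ℝ)) := by
    rw [Nat.cast_choose ℝ hk]
  have p1 : (x-1)^j = (-1)^j * 2^j * ((1-x)/2)^j := by
    rw [show x-1 = (-1)*2*((1-x)/2) by ring, mul_pow, mul_pow]
  have p2 : (2:ℝ)^n = 2^(n-(k+j)) * 2^j * 2^k := by
    rw [← pow_add, ← pow_add]; congr 1; omega
  rw [c1, c2, e1, e2, e3, e4, d1, d2, d3, p1, p2]
  have f0 : ∀ a : ℕ, (a.factorial : ℝ) ≠ 0 := fun a => Nat.cast_ne_zero.2 (Nat.factorial_ne_zero a)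
  have t2 : (2:ℝ) ≠ 0 := two_ne_zero
  field_simp

theorem legendre_iteratedDeriv_hypergeometric (n k : ℕ) (hk : k ≤ n) (x : ℝ) :
    iteratedDeriv k (legendre n) x =
      (n.choose k : ℝ) * (risingFactorial ((n : ℝ) + 1) k / 2 ^ k) *
        ∑ j ∈ Finset.range (n - k + 1),
          (risingFactorial ((k : ℝ) - n) j * risingFactorial ((n : ℝ) + 1 + k) j /
              risingFactorial (1 + (k : ℝ)) j) * ((1 - x) / 2) ^ j / (j.factorial : ℝ) := by
  set c : ℝ := 1 / (2 ^ n * (n.factorial : ℝ)) with hc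
  set f : ℝ → ℝ := fun y => (y ^ 2 - 1) ^ n with hf
  have hterm : ∀ m : ℕ, ContDiff ℝ (⊤ : ℕ∞) (fun y : ℝ => ((n.choose m : ℝ) * 2 ^ (n - m)) * (y - 1) ^ (n + m)) :=
    fun m => contDiff_const.mul (contDiff_pow_sub _)
  have key : ∀ (q : ℕ) (z : ℝ), iteratedDeriv q f z =
      ∑ m ∈ Finset.range (n + 1),
        ((n.choose m : ℝ) * 2 ^ (n - m) * ((n + m).descFactorial q : ℝ)) * (z - 1) ^ (n + m - q) := by
    intro q z
    have hfe : f = fun y => ∑ m ∈ Finset.range (n + 1),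
        ((n.choose m : ℝ) * 2 ^ (n - m)) * (y - 1) ^ (n + m) := funext fun y => expand_sq n y
    rw [hfe, iteratedDeriv_sum' _ _ (fun m _ => hterm m)]
    refine Finset.sum_congr rfl fun m _ => ?_
    rw [iteratedDeriv_cmul _ (contDiff_pow_sub _), iteratedDeriv_pow_sub_one]
    ring
  have hleg : legendre n = fun z : ℝ => c * ∑ m ∈ Finset.range (n + 1),
      ((n.choose m : ℝ) * 2 ^ (n - m) * ((n + m).descFactorial n : ℝ)) * (z - 1) ^ m := by
    funext z
    show c * iteratedDeriv n f z = _
    rw [key n z]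
    simp only [Nat.add_sub_cancel_left]
  have hsmooth : ContDiff ℝ (⊤ : ℕ∞) (fun z : ℝ => ∑ m ∈ Finset.range (n + 1),
      ((n.choose m : ℝ) * 2 ^ (n - m) * ((n + m).descFactorial n : ℝ)) * (z - 1) ^ m) :=
    ContDiff.sum fun m _ => contDiff_const.mul ((contDiff_id.sub contDiff_const).pow m)
  rw [hleg, iteratedDeriv_cmul c hsmooth x,
    iteratedDeriv_sum' (Finset.range (n + 1))
      (fun m z => ((n.choose m : ℝ) * 2 ^ (n - m) * ((n + m).descFactorial n : ℝ)) * (z - 1) ^ m)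
      (fun m _ => contDiff_const.mul ((contDiff_id.sub contDiff_const).pow m)) k x]
  have step : ∀ m ∈ Finset.range (n + 1),
      iteratedDeriv k (fun z : ℝ => ((n.choose m : ℝ) * 2 ^ (n - m) * ((n + m).descFactorial n : ℝ)) * (z - 1) ^ m) x
      = ((n.choose m : ℝ) * 2 ^ (n - m) * ((n + m).descFactorial n : ℝ)) *
          ((m.descFactorial k : ℝ) * (x - 1) ^ (m - k)) := by
    intro m _
    rw [iteratedDeriv_cmul _ (contDiff_pow_sub m), iteratedDeriv_pow_sub_one]
  rw [Finset.sum_congr rfl step]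
  -- restrict the sum to m ≥ k
  have hsub : ∑ m ∈ Finset.range (n + 1),
      ((n.choose m : ℝ) * 2 ^ (n - m) * ((n + m).descFactorial n : ℝ)) *
        ((m.descFactorial k : ℝ) * (x - 1) ^ (m - k))
      = ∑ m ∈ Finset.Ico k (n + 1),
      ((n.choose m : ℝ) * 2 ^ (n - m) * ((n + m).descFactorial n : ℝ)) *
        ((m.descFactorial k : ℝ) * (x - 1) ^ (m - k)) := by
    refine (Finset.sum_subset ?_ ?_).symm
    · intro m hm
      simp only [Finset.mem_Ico, Finset.mem_range] at *
      omega
    · intro m hm hnm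
      have hmk : m < k := by
        simp only [Finset.mem_Ico, Finset.mem_range] at *
        omega
      simp [Nat.descFactorial_eq_zero_iff_lt.2 hmk]
  rw [hsub, Finset.sum_Ico_eq_sum_range, show n + 1 - k = n - k + 1 from by omega,
    Finset.mul_sum, Finset.mul_sum]
  refine Finset.sum_congr rfl fun j hj => ?_
  have hj' : j ≤ n - k := by
    have := Finset.mem_range.1 hj
    omega
  have := term_eq n k j hk hj' x
  simp only [Nat.add_sub_cancel_left] at *
  linear_combination this
end

section
/- Define real coefficients α(n,k,i), for natural numbers n, k, i with k ≤ n and 2i ≤ n−k, by the recurrence α(n,k,i) = 2^{k+2i} · (n−1/2)^{\underline{k}} · (n−i)^{\underline{i}} · (n−k−1/2)^{\underline{2i}} / ((2i)^{\underline{2i}} · (n−1/2)^{\underline{i}}) − Σ_{l=0}^{i−1} ( (2(n−k−i−l))^{\underline{2(i−l)}} / (2(i−l))^{\underline{2(i−l)}} ) · α(n,k,l), where x^{\underline{m}} = x(x−1)⋯(x−m+1) denotes the falling factorial with x^{\underline{0}} = 1. Then for all natural numbers n, k with k ≤ n and every real x, the k-th derivative of the Legendre polynomial satisfies d^k/dx^k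 P_n(x) = Σ_{i=0}^{⌊(n−k)/2⌋} α(n,k,i) · P_{n−k−2i}(x). -/
/-- Falling factorial of a real number: `x^{(m)} = x (x-1) ⋯ (x-m+1)`. -/
noncomputable def fallingFactorial (x : ℝ) (m : ℕ) : ℝ := ∏ i ∈ Finset.range m, (x - i)

open Polynomial
open scoped Nat

lemma fallingFactorial_eq_eval_descPochhammer (x : ℝ) (m : ℕ) :
    fallingFactorial x m = (descPochhammer ℝ m).eval x :=
  (descPochhammer_eval_eq_prod_range m x).symm

lemma fallingFactorial_add (x : ℝ) (a b : ℕ) :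
    fallingFactorial x (a + b) = fallingFactorial x a * fallingFactorial (x - a) b := by
  simp only [fallingFactorial_eq_eval_descPochhammer, ← descPochhammer_mul, eval_mul, eval_comp,
    eval_sub, eval_X, eval_natCast]

lemma fallingFactorial_succ_left (x : ℝ) (m : ℕ) :
    fallingFactorial x (m + 1) = x * fallingFactorial (x - 1) m := by
  rw [add_comm, fallingFactorial_add]
  simp [fallingFactorial]

lemma fallingFactorial_succ_right (x : ℝ) (m : ℕ) :
    fallingFactorial x (m + 1) = fallingFactorial x m * (x - m) :=
  Finset.prod_range_succ _ _

lemma fallingFactorial_natCast (a b : ℕ) : fallingFactorial a b = a.descFactorial b := by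
  rw [fallingFactorial_eq_eval_descPochhammer, descPochhammer_eval_eq_descFactorial]

lemma fallingFactorial_pos {x : ℝ} {m : ℕ} (h : (m : ℝ) - 1 < x) :
    0 < fallingFactorial x m := by
  rw [fallingFactorial_eq_eval_descPochhammer]
  exact descPochhammer_pos h

lemma fallingFactorial_two_mul (x : ℝ) (m : ℕ) :
    fallingFactorial (2 * x) (2 * m) =
      4 ^ m * fallingFactorial x m * fallingFactorial (x - 1 / 2) m := by
  induction m with
  | zero => simp [fallingFactorial]
  | succ m ih =>
    rw [show 2 * (m + 1) = 2 * m + 1 + 1 by ring, fallingFactorial_succ_right,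
      fallingFactorial_succ_right, ih, fallingFactorial_succ_right, fallingFactorial_succ_right]
    push_cast
    ring

lemma cast_choose_eq_fallingFactorial_div (a b : ℕ) :
    (a.choose b : ℝ) = fallingFactorial a b / fallingFactorial b b := by
  rw [Nat.cast_choose_eq_descPochhammer_div, fallingFactorial_natCast b, Nat.descFactorial_self,
    fallingFactorial_eq_eval_descPochhammer]

lemma Nat.factorial_two_mul_eq_mul_doubleFactorial (j : ℕ) :
    (2 * j)! = 2 ^ j * j ! * (2 * j - 1)‼ := by
  rcases j with _ | j
  · rfl
  · rw [show 2 * (j + 1) = 2 * j + 1 + 1 by ring, Nat.factorial_eq_mul_doubleFactorial,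
      show 2 * j + 1 + 1 = 2 * (j + 1) by ring, Nat.doubleFactorial_two_mul,
      show 2 * (j + 1) - 1 = 2 * j + 1 by omega]

lemma Nat.choose_add_mul_descFactorial {m j : ℕ} (hj : j ≤ m) :
    (m + j).choose j * m.descFactorial j = (m + j).choose (2 * j) * (2 * j - 1)‼ * 2 ^ j := by
  have hpos : 0 < j ! * (m - j)! := by positivity
  refine Nat.eq_of_mul_eq_mul_right hpos ?_
  calc (m + j).choose j * m.descFactorial j * (j ! * (m - j)!)
      = (m + j).choose j * j ! * ((m - j)! * m.descFactorial j) := by ring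
    _ = (m + j)! := by
      have hchoose := Nat.choose_mul_factorial_mul_factorial (Nat.le_add_left j m)
      rwa [Nat.add_sub_cancel, ← Nat.factorial_mul_descFactorial hj] at hchoose
    _ = (m + j).choose (2 * j) * (2 * j)! * (m + j - 2 * j)! :=
      (Nat.choose_mul_factorial_mul_factorial (by omega)).symm
    _ = (m + j).choose (2 * j) * (2 * j - 1)‼ * 2 ^ j * (j ! * (m - j)!) := by
      rw [Nat.factorial_two_mul_eq_mul_doubleFactorial, show m + j - 2 * j = m - j by omega]
      ring

lemma doubleFactorial_two_mul_add_sub_one (k d : ℕ) :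
    ((2 * (k + d) - 1)‼ : ℝ) =
      2 ^ k * fallingFactorial ((k + d : ℕ) - 1 / 2) k * (2 * d - 1)‼ := by
  induction k with
  | zero => simp [fallingFactorial]
  | succ k ih =>
    rw [show 2 * (k + 1 + d) - 1 = 2 * (k + d) + 1 by omega, Nat.doubleFactorial_add_one,
      fallingFactorial_succ_left, Nat.cast_mul, ih]
    push_cast
    ring_nf

lemma iteratedDeriv_polynomial_eval {𝕜 : Type*} [NontriviallyNormedField 𝕜] (p : 𝕜[X])
    (k : ℕ) :
    iteratedDeriv k (fun x => p.eval x) = fun x => (derivative^[k] p).eval x := by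
  induction k with
  | zero => simp
  | succ k ih =>
    rw [iteratedDeriv_succ, ih, Function.iterate_succ_apply']
    exact funext fun x => Polynomial.deriv _

lemma iterate_derivative_comp_neg_X {R : Type*} [CommRing R] (p : R[X]) (k : ℕ) :
    (derivative^[k] p).comp (-X) = C ((-1) ^ k) * derivative^[k] (p.comp (-X)) := by
  induction k with
  | zero => simp
  | succ k ih =>
    have hstep := derivative_comp (derivative^[k] p) (-X)
    rw [ih, derivative_C_mul, derivative_neg, derivative_X] at hstep
    rw [Function.iterate_succ_apply', Function.iterate_succ_apply', pow_succ, C_mul,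
      C_neg, C_1]
    linear_combination hstep

lemma iterate_derivative_natDegree {R : Type*} [CommSemiring R] (p : R[X]) :
    derivative^[p.natDegree] p = C (p.natDegree ! * p.leadingCoeff) := by
  rw [eq_C_of_natDegree_le_zero ((natDegree_iterate_derivative _ _).trans (by simp)),
    coeff_iterate_derivative, zero_add, Nat.descFactorial_self, nsmul_eq_mul, leadingCoeff]

section Parity

variable {R : Type*} [CommRing R] [IsDomain R] [CharZero R]

lemma even_sub_natDegree_of_comp_neg_X {Q : R[X]} {N : ℕ} (hQ : Q ≠ 0)
    (hdeg : Q.natDegree ≤ N) (hpar : Q.comp (-X) = C ((-1) ^ N) * Q) :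
    Even (N - Q.natDegree) := by
  have hsign : (-1 : R) ^ (N - Q.natDegree) * (-1) ^ Q.natDegree = 1 * (-1) ^ Q.natDegree := by
    have hlead := congrArg leadingCoeff hpar
    rw [leadingCoeff_comp (by simp), leadingCoeff_mul, leadingCoeff_C, leadingCoeff_neg,
      leadingCoeff_X] at hlead
    rw [← pow_add, Nat.sub_add_cancel hdeg, one_mul]
    exact (mul_left_cancel₀ (leadingCoeff_ne_zero.2 hQ) (hlead.trans (mul_comm _ _))).symm
  exact (neg_one_pow_eq_one_iff_even (by norm_num)).1
    (mul_right_cancel₀ (pow_ne_zero _ (by norm_num)) hsign)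
lemma eq_zero_of_comp_neg_X_of_eval_one_iterate_derivative {Q : R[X]} {N : ℕ}
    (hdeg : Q.natDegree ≤ N) (hpar : Q.comp (-X) = C ((-1) ^ N) * Q)
    (hvanish : ∀ i, 2 * i ≤ N → (derivative^[N - 2 * i] Q).eval 1 = 0) : Q = 0 := by
  by_contra hQ
  obtain ⟨i, hi⟩ := even_sub_natDegree_of_comp_neg_X hQ hdeg hpar
  have htop := hvanish i (by omega)
  rw [show N - 2 * i = Q.natDegree by omega, iterate_derivative_natDegree, eval_C] at htop
  exact mul_ne_zero (by exact_mod_cast Q.natDegree.factorial_ne_zero)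
    (leadingCoeff_ne_zero.2 hQ) htop

end Parity

noncomputable def legendrePoly (n : ℕ) : ℝ[X] :=
  C (1 / (2 ^ n * n ! : ℝ)) * derivative^[n] ((X ^ 2 - 1) ^ n)

lemma legendre_eq_eval (n : ℕ) : legendre n = fun x => (legendrePoly n).eval x := by
  have hpoly : (fun y : ℝ => (y ^ 2 - 1) ^ n) = fun y => ((X ^ 2 - 1 : ℝ[X]) ^ n).eval y := by
    simp
  funext x
  simp only [legendre, legendrePoly, hpoly, iteratedDeriv_polynomial_eval, eval_mul, eval_C]

lemma iteratedDeriv_legendre (n k : ℕ) (x : ℝ) :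
    iteratedDeriv k (legendre n) x = (derivative^[k] (legendrePoly n)).eval x := by
  rw [legendre_eq_eval, iteratedDeriv_polynomial_eval]

lemma natDegree_legendrePoly_le (n : ℕ) : (legendrePoly n).natDegree ≤ n := by
  have hdeg : ((X ^ 2 - 1 : ℝ[X]) ^ n).natDegree ≤ n * 2 :=
    natDegree_pow_le_of_le n ((natDegree_sub_le (X ^ 2 : ℝ[X]) 1).trans (by simp))
  refine (natDegree_C_mul_le _ _).trans ((natDegree_iterate_derivative _ _).trans ?_)
  omega

lemma legendrePoly_comp_neg_X (n : ℕ) :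
    (legendrePoly n).comp (-X) = C ((-1) ^ n) * legendrePoly n := by
  have hsymm : ((X ^ 2 - 1 : ℝ[X]) ^ n).comp (-X) = (X ^ 2 - 1) ^ n := by simp
  rw [legendrePoly, mul_comp, C_comp, iterate_derivative_comp_neg_X, hsymm]
  ring

lemma iterate_derivative_legendrePoly_comp_neg_X {n k : ℕ} (hk : k ≤ n) :
    (derivative^[k] (legendrePoly n)).comp (-X) =
      C ((-1) ^ (n - k)) * derivative^[k] (legendrePoly n) := by
  rw [iterate_derivative_comp_neg_X, legendrePoly_comp_neg_X, iterate_derivative_C_mul,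
    ← mul_assoc, ← C_mul, ← pow_add]
  congr 2
  rw [show k + n = n - k + 2 * k by omega, pow_add, pow_mul]
  norm_num

lemma sum_C_mul_legendrePoly_comp_neg_X (N : ℕ) (a : ℕ → ℝ) :
    (∑ i ∈ Finset.range (N / 2 + 1), C (a i) * legendrePoly (N - 2 * i)).comp (-X) =
      C ((-1) ^ N) * ∑ i ∈ Finset.range (N / 2 + 1), C (a i) * legendrePoly (N - 2 * i) := by
  rw [sum_comp, Finset.mul_sum]
  refine Finset.sum_congr rfl fun i hi => ?_
  have hsign : (-1 : ℝ) ^ N = (-1) ^ (N - 2 * i) := by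
    rw [Finset.mem_range] at hi
    rw [← Nat.sub_add_cancel (show 2 * i ≤ N by omega), pow_add, pow_mul, Nat.add_sub_cancel]
    norm_num
  rw [mul_comp, C_comp, legendrePoly_comp_neg_X, hsign]
  ring

lemma eval_one_iterate_derivative_X_sq_sub_one_pow {m j : ℕ} (hj : j ≤ m) :
    (derivative^[m + j] ((X ^ 2 - 1 : ℝ[X]) ^ m)).eval 1 =
      (m + j).choose j * m ! * m.descFactorial j * 2 ^ (m - j) := by
  have hfactor : (X ^ 2 - 1 : ℝ[X]) ^ m = (X - C 1) ^ m * (X + C 1) ^ m := by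
    rw [← mul_pow]
    congr 1
    simp only [C_1]
    ring
  -- at `1`, only the Leibniz term differentiating `(X - 1) ^ m` exactly `m` times survives
  rw [hfactor, iterate_derivative_mul, eval_finsetSum, Finset.sum_eq_single j]
  · rw [iterate_derivative_X_sub_pow, iterate_derivative_X_add_pow,
      show m + j - j = m by omega]
    simp [Nat.descFactorial_self]
    ring
  · intro r hr hrj
    rw [iterate_derivative_X_sub_pow, iterate_derivative_X_add_pow]
    rcases lt_or_gt_of_ne hrj with hlt | hgt
    · rw [Nat.descFactorial_eq_zero_iff_lt.2 (by omega : m < m + j - r)]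
      simp
    · have hpos : m - (m + j - r) ≠ 0 := by
        rw [Finset.mem_range] at hr
        omega
      simp [zero_pow hpos]
  · intro hj'
    exact absurd (Finset.mem_range.2 (by omega)) hj'

lemma eval_one_iterate_derivative_legendrePoly (m j : ℕ) :
    (derivative^[j] (legendrePoly m)).eval 1 = (m + j).choose (2 * j) * (2 * j - 1)‼ := by
  rcases le_or_gt j m with hj | hj
  · have hnat : ((m + j).choose j * m.descFactorial j : ℝ) =
        (m + j).choose (2 * j) * (2 * j - 1)‼ * 2 ^ j := by
      exact_mod_cast Nat.choose_add_mul_descFactorial hj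
    have hpow : (2 : ℝ) ^ m = 2 ^ j * 2 ^ (m - j) := by
      rw [← pow_add, Nat.add_sub_cancel' hj]
    rw [legendrePoly, iterate_derivative_C_mul, eval_mul, eval_C, ← Function.iterate_add_apply,
      add_comm j m, eval_one_iterate_derivative_X_sq_sub_one_pow hj, hpow]
    field_simp
    linear_combination hnat
  · rw [iterate_derivative_eq_zero ((natDegree_legendrePoly_le m).trans_lt hj),
      Nat.choose_eq_zero_of_lt (by omega)]
    simp

/- Write `c m j = P_m^{(j)}(1)` and `N = n - k`. The recurrence for `α` reads
`α i = expansionLead n k i - ∑ l < i, expansionWeight n k i l * α l`, where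
`expansionLead n k i = c n (n - 2i) / c (N - 2i) (N - 2i)` and
`expansionWeight n k i l = c (N - 2l) (N - 2i) / c (N - 2i) (N - 2i)`. -/
noncomputable def expansionLead (n k i : ℕ) : ℝ :=
  2 ^ (k + 2 * i) * fallingFactorial ((n : ℝ) - 1 / 2) k * fallingFactorial ((n : ℝ) - i) i *
      fallingFactorial ((n : ℝ) - k - 1 / 2) (2 * i) /
    (fallingFactorial ((2 * i : ℕ) : ℝ) (2 * i) * fallingFactorial ((n : ℝ) - 1 / 2) i)

noncomputable def expansionWeight (n k i l : ℕ) : ℝ :=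
  fallingFactorial (2 * ((n : ℝ) - k - i - l)) (2 * (i - l)) /
    fallingFactorial (2 * ((i : ℝ) - l)) (2 * (i - l))

lemma cast_choose_eq_expansionWeight {n k i l : ℕ} (hk : k ≤ n) (hi : 2 * i ≤ n - k)
    (hl : l ≤ i) :
    (((n - k - 2 * l) + (n - k - 2 * i)).choose (2 * (n - k - 2 * i)) : ℝ) =
      expansionWeight n k i l := by
  obtain ⟨d, rfl⟩ : ∃ d, n = k + 2 * i + d := ⟨n - k - 2 * i, by omega⟩
  obtain ⟨j, rfl⟩ : ∃ j, i = l + j := ⟨i - l, by omega⟩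
  rw [show k + 2 * (l + j) + d - k - 2 * l + (k + 2 * (l + j) + d - k - 2 * (l + j)) =
      2 * (d + j) by omega, show 2 * (k + 2 * (l + j) + d - k - 2 * (l + j)) = 2 * d by omega,
    ← Nat.choose_symm_of_eq_add (show 2 * (d + j) = 2 * j + 2 * d by ring),
    cast_choose_eq_fallingFactorial_div, expansionWeight, show l + j - l = j by omega]
  congr 2 <;> push_cast <;> ring

lemma cast_choose_mul_doubleFactorial_eq_expansionLead {n k i : ℕ} (hk : k ≤ n)
    (hi : 2 * i ≤ n - k) :
    ((n + (n - 2 * i)).choose (2 * (n - 2 * i)) * (2 * (n - 2 * i) - 1)‼ : ℝ) =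
      (2 * (n - k - 2 * i) - 1)‼ * expansionLead n k i := by
  obtain ⟨d, rfl⟩ : ∃ d, n = k + 2 * i + d := ⟨n - k - 2 * i, by omega⟩
  set x : ℝ := ((k + 2 * i + d : ℕ) : ℝ) - 1 / 2 with hx
  have hchoose : (((k + 2 * i + d) + (k + d)).choose (2 * (k + d)) : ℝ) =
      4 ^ i * fallingFactorial (x + 1 / 2 - i) i * fallingFactorial (x - i) i /
        fallingFactorial ((2 * i : ℕ) : ℝ) (2 * i) := by
    rw [← Nat.choose_symm_of_eq_add
        (show k + 2 * i + d + (k + d) = 2 * i + 2 * (k + d) by omega),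
      cast_choose_eq_fallingFactorial_div,
      show k + 2 * i + d + (k + d) = 2 * (k + i + d) by omega, Nat.cast_mul, Nat.cast_ofNat,
      fallingFactorial_two_mul, hx]
    push_cast
    ring_nf
  have hdouble := doubleFactorial_two_mul_add_sub_one k d
  rw [show ((k + d : ℕ) : ℝ) - 1 / 2 = x - i - i by rw [hx]; push_cast; ring] at hdouble
  have hn_sub_i : ((k + 2 * i + d : ℕ) : ℝ) - i = x + 1 / 2 - i := by rw [hx]; ring
  have hn_sub_k : ((k + 2 * i + d : ℕ) : ℝ) - k - 1 / 2 = x - k := by rw [hx]; ring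
  have hx_ne : fallingFactorial x i ≠ 0 :=
    (fallingFactorial_pos (by rw [hx]; push_cast; linarith)).ne'
  have hfac_ne : fallingFactorial ((2 * i : ℕ) : ℝ) (2 * i) ≠ 0 :=
    (fallingFactorial_pos (by linarith)).ne'
  -- both sides are `fallingFactorial x (k + 2 * i)`, split in two ways
  have hsplit : fallingFactorial x i * fallingFactorial (x - i) i *
      fallingFactorial (x - i - i) k = fallingFactorial x k * fallingFactorial (x - k) (2 * i) := by
    rw [mul_assoc, ← fallingFactorial_add, ← fallingFactorial_add, ← fallingFactorial_add]
    ring_nf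
  rw [show k + 2 * i + d - 2 * i = k + d by omega, show k + 2 * i + d - k - 2 * i = d by omega,
    hchoose, hdouble, expansionLead, ← hx, hn_sub_i, hn_sub_k, div_mul_eq_mul_div,
    mul_div_assoc', div_eq_div_iff hfac_ne (mul_ne_zero hfac_ne hx_ne), pow_add, pow_mul]
  linear_combination (fallingFactorial (x + 1 / 2 - i) i * 2 ^ k * 4 ^ i * (2 * d - 1)‼ *
    fallingFactorial ((2 * i : ℕ) : ℝ) (2 * i)) * hsplit

lemma sum_mul_cast_choose_mul_doubleFactorial {n k : ℕ} (hk : k ≤ n) {a : ℕ → ℝ}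
    (ha : ∀ i, 2 * i ≤ n - k →
      a i = expansionLead n k i - ∑ l ∈ Finset.range i, expansionWeight n k i l * a l)
    {i : ℕ} (hi : 2 * i ≤ n - k) :
    ∑ l ∈ Finset.range ((n - k) / 2 + 1), a l *
        (((n - k - 2 * l) + (n - k - 2 * i)).choose (2 * (n - k - 2 * i)) *
          (2 * (n - k - 2 * i) - 1)‼ : ℝ) =
      (n + (n - 2 * i)).choose (2 * (n - 2 * i)) * (2 * (n - 2 * i) - 1)‼ := by
  have htail : ∀ l ∈ Finset.range ((n - k) / 2 + 1), l ∉ Finset.range (i + 1) →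
      a l * (((n - k - 2 * l) + (n - k - 2 * i)).choose (2 * (n - k - 2 * i)) *
        (2 * (n - k - 2 * i) - 1)‼ : ℝ) = 0 := by
    intro l hl hli
    rw [Finset.mem_range] at hl hli
    rw [Nat.choose_eq_zero_of_lt (by omega)]
    simp
  have hweight : ∀ l ∈ Finset.range i,
      a l * (((n - k - 2 * l) + (n - k - 2 * i)).choose (2 * (n - k - 2 * i)) *
        (2 * (n - k - 2 * i) - 1)‼ : ℝ) =
      expansionWeight n k i l * a l * (2 * (n - k - 2 * i) - 1)‼ := by
    intro l hl
    rw [cast_choose_eq_expansionWeight hk hi (Finset.mem_range.1 hl).le]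
    ring
  rw [← Finset.sum_subset (Finset.range_subset_range.2 (by omega)) htail, Finset.sum_range_succ,
    Finset.sum_congr rfl hweight, ← Finset.sum_mul, ha i hi,
    cast_choose_mul_doubleFactorial_eq_expansionLead hk hi,
    show n - k - 2 * i + (n - k - 2 * i) = 2 * (n - k - 2 * i) by omega, Nat.choose_self]
  ring

theorem legendre_iteratedDeriv_expansion
    (α : ℕ → ℕ → ℕ → ℝ)
    (hα : ∀ n k i : ℕ, k ≤ n → 2 * i ≤ n - k →
      α n k i =
        2 ^ (k + 2 * i) * fallingFactorial ((n : ℝ) - 1 / 2) k *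
            fallingFactorial ((n : ℝ) - i) i *
            fallingFactorial ((n : ℝ) - k - 1 / 2) (2 * i) /
          (fallingFactorial ((2 * i : ℕ) : ℝ) (2 * i) *
            fallingFactorial ((n : ℝ) - 1 / 2) i) -
        ∑ l ∈ Finset.range i,
          (fallingFactorial (2 * ((n : ℝ) - k - i - l)) (2 * (i - l)) /
              fallingFactorial (2 * ((i : ℝ) - l)) (2 * (i - l))) * α n k l) :
    ∀ n k : ℕ, k ≤ n → ∀ x : ℝ,
      iteratedDeriv k (legendre n) x =
        ∑ i ∈ Finset.range ((n - k) / 2 + 1), α n k i * legendre (n - k - 2 * i) x := by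
  intro n k hk x
  have hpoly : derivative^[k] (legendrePoly n) =
      ∑ i ∈ Finset.range ((n - k) / 2 + 1), C (α n k i) * legendrePoly (n - k - 2 * i) := by
    rw [← sub_eq_zero]
    refine eq_zero_of_comp_neg_X_of_eval_one_iterate_derivative (N := n - k) ?_ ?_ ?_
    · refine (natDegree_sub_le _ _).trans (max_le ?_ (natDegree_sum_le_of_forall_le _ _ ?_))
      · exact (natDegree_iterate_derivative _ _).trans
          (Nat.sub_le_sub_right (natDegree_legendrePoly_le n) k)
      · exact fun i _ => (natDegree_C_mul_le _ _).trans
          ((natDegree_legendrePoly_le _).trans (by omega))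
    · rw [sub_comp, iterate_derivative_legendrePoly_comp_neg_X hk,
        sum_C_mul_legendrePoly_comp_neg_X, mul_sub]
    · intro i hi
      rw [iterate_derivative_sub, eval_sub, sub_eq_zero, ← Function.iterate_add_apply,
        eval_one_iterate_derivative_legendrePoly, iterate_derivative_sum, eval_finsetSum,
        show n - k - 2 * i + k = n - 2 * i by omega]
      simp only [iterate_derivative_C_mul, eval_mul, eval_C,
        eval_one_iterate_derivative_legendrePoly]
      exact (sum_mul_cast_choose_mul_doubleFactorial hk (fun i hi => hα n k i hk hi) hi).symm
  rw [iteratedDeriv_legendre, hpoly, eval_finsetSum]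
  simp only [eval_mul, eval_C, legendre_eq_eval]
end
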